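/- Suppose i is a *-invariant ideal of A with i² = 0. Fix a basis of V with Gram matrix X. Then the kernel of the canonical map U → Ū consists exactly of matrices 1 + M with M ∈ M_m(i) satisfying (M*)ᵗ X + X M = 0, and if X is diagonal with unit entries this kernel has order |i|^{m(m−1)/2} · |k|^m, where k = {a ∈ i : a + a* = 0}. -/

import Mathlib

open MulOpposite

/-- A `*`-hermitian form on a right `A`-module `V` (right modules are encoded as
modules over the opposite ring `Aᵐᵒᵖ`): it is additive and `A`-linear in the second
variable and satisfies `h v u = (h u v)*`. -/
structure HermitianForm (A V : Type*) [Ring A] [StarRing A] [AddCommGroup V]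
    [Module Aᵐᵒᵖ V] where
  toFun : V → V → A
  add_right : ∀ u v w : V, toFun u (v + w) = toFun u v + toFun u w
  smul_right : ∀ (a : A) (u v : V), toFun u (op a • v) = toFun u v * a
  conj_symm : ∀ u v : V, toFun v u = star (toFun u v)

namespace HermitianForm

variable {A V : Type*} [Ring A] [StarRing A] [AddCommGroup V] [Module Aᵐᵒᵖ V]

/-- Non-degeneracy: the map `u ↦ h u -` is a bijection of `V` onto the dual module. -/
def Nondeg (h : HermitianForm A V) : Prop :=
  ∀ φ : V →ₗ[Aᵐᵒᵖ] A, ∃! u : V, ∀ v : V, h.toFun u v = φ v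

end HermitianForm

/-- A vector of the free module `V` of rank `m` is primitive if it belongs to a basis. -/
def IsPrimitive (A : Type*) {V : Type*} [Ring A] [AddCommGroup V] [Module Aᵐᵒᵖ V]
    (m : ℕ) (v : V) : Prop :=
  ∃ (b : Module.Basis (Fin m) Aᵐᵒᵖ V) (i : Fin m), b i = v

/-!
Write `g = 1 + D` in the basis `b`. As `I² = 0`, the quadratic term `Dᴴ X D` of
`(1 + D)ᴴ X (1 + D)` vanishes, so `g` is an isometry exactly when `Dᴴ X + X D = 0`; conversely
every `D` with entries in `I` gives an automorphism `1 + D`, with inverse `1 - D`. When `X` is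
invertible, `D ↦ X D` identifies these `D` with the skew-hermitian matrices with entries in `I`,
which are freely determined by their entries above the diagonal (in `I`) and on it (in `𝔨`).
-/

open Matrix

namespace HermitianForm

variable {A V : Type*} [Ring A] [StarRing A] [AddCommGroup V] [Module Aᵐᵒᵖ V]
  (h : HermitianForm A V)

/-- Here `A` is a right `A`-module through `op a • x = x * a`. -/
@[simps]
def toLinearMap (u : V) : V →ₗ[Aᵐᵒᵖ] A where
  toFun := h.toFun u
  map_add' := h.add_right u
  map_smul' c v := by rw [← op_unop c, h.smul_right, RingHom.id_apply, op_smul_eq_mul]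

lemma smul_left (a : A) (u v : V) : h.toFun (op a • u) v = star a * h.toFun u v := by
  rw [h.conj_symm, h.smul_right, star_mul, ← h.conj_symm]

lemma sum_right {ι : Type*} (s : Finset ι) (u : V) (f : ι → V) :
    h.toFun u (∑ i ∈ s, f i) = ∑ i ∈ s, h.toFun u (f i) :=
  map_sum (h.toLinearMap u) f s

lemma sum_left {ι : Type*} (s : Finset ι) (f : ι → V) (v : V) :
    h.toFun (∑ i ∈ s, f i) v = ∑ i ∈ s, h.toFun (f i) v := by
  rw [h.conj_symm, sum_right, star_sum]
  simp only [← h.conj_symm]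

variable {ι : Type*} (b : Module.Basis ι Aᵐᵒᵖ V)

noncomputable def gram : Matrix ι ι A := of fun i j => h.toFun (b i) (b j)

lemma gram_conjTranspose : (h.gram b)ᴴ = h.gram b := by
  ext i j
  simp [gram, ← h.conj_symm]

lemma apply_sum_smul_basis [Fintype ι] (P Q : Matrix ι ι A) (i j : ι) :
    h.toFun (∑ k, op (P k i) • b k) (∑ l, op (Q l j) • b l) = (Pᴴ * h.gram b * Q) i j := by
  simp only [h.sum_left, h.sum_right, h.smul_left, h.smul_right, mul_apply, Finset.sum_mul,
    conjTranspose_apply, gram, of_apply, mul_assoc]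
  exact Finset.sum_comm

lemma forall_apply_map_eq_iff (f : V →ₗ[Aᵐᵒᵖ] V) :
    (∀ u v, h.toFun (f u) (f v) = h.toFun u v) ↔
      ∀ i j, h.toFun (f (b i)) (f (b j)) = h.toFun (b i) (b j) := by
  refine ⟨fun hf i j => hf _ _, fun hb => ?_⟩
  have hbasis (i : ι) (v : V) : h.toFun (f (b i)) (f v) = h.toFun (b i) v :=
    LinearMap.congr_fun (b.ext (f₁ := h.toLinearMap (f (b i)) ∘ₗ f)
      (f₂ := h.toLinearMap (b i)) (hb i)) v
  intro u v
  rw [h.conj_symm (f v), h.conj_symm v]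
  congr 1
  refine LinearMap.congr_fun (b.ext (f₁ := h.toLinearMap (f v) ∘ₗ f)
    (f₂ := h.toLinearMap v) fun i => ?_) u
  simp only [LinearMap.comp_apply, toLinearMap_apply]
  rw [h.conj_symm (f (b i)), hbasis, ← h.conj_symm]

end HermitianForm

namespace Module.Basis

variable {R M N ι : Type*} [Semiring R] [AddCommMonoid M] [Module R M] [AddCommMonoid N]
  [Module R N] (b : Basis ι R M)

lemma forall_map_mem_iff (f : M →ₗ[R] N) (S : Submodule R N) :
    (∀ v, f v ∈ S) ↔ ∀ j, f (b j) ∈ S := by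
  refine ⟨fun hf j => hf (b j), fun hb v => ?_⟩
  have : Submodule.span R (Set.range b) ≤ S.comap f :=
    Submodule.span_le.2 (Set.range_subset_iff.2 hb)
  exact this (b.span_eq ▸ Submodule.mem_top)

end Module.Basis

namespace Module.Basis

variable {A V ι : Type*} [Ring A] [AddCommGroup V] [Module Aᵐᵒᵖ V] (b : Basis ι Aᵐᵒᵖ V)

/-- Column `j` holds the coordinates of `f (b j)`, read in `A`. -/
noncomputable def opMatrix (f : V →ₗ[Aᵐᵒᵖ] V) : Matrix ι ι A :=
  of fun k j => unop (b.repr (f (b j)) k)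

lemma opMatrix_add (f f' : V →ₗ[Aᵐᵒᵖ] V) :
    b.opMatrix (f + f') = b.opMatrix f + b.opMatrix f' := by
  ext k j
  simp [opMatrix]

lemma opMatrix_zero : b.opMatrix 0 = 0 := by
  ext k j
  simp [opMatrix]

lemma opMatrix_one [DecidableEq ι] : b.opMatrix 1 = 1 := by
  ext k j
  simp only [opMatrix, End.one_apply, repr_self, Finsupp.single_apply, eq_comm, of_apply,
    one_apply]
  split_ifs <;> rfl

variable [Fintype ι]

lemma sum_opMatrix_smul (f : V →ₗ[Aᵐᵒᵖ] V) (j : ι) :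
    ∑ k, op (b.opMatrix f k j) • b k = f (b j) := by
  simp only [opMatrix, of_apply, op_unop]
  exact b.sum_repr _

lemma opMatrix_eq_iff {f : V →ₗ[Aᵐᵒᵖ] V} {M : Matrix ι ι A} :
    b.opMatrix f = M ↔ ∀ j, f (b j) = ∑ k, op (M k j) • b k := by
  refine ⟨fun hf j => hf ▸ (b.sum_opMatrix_smul f j).symm, fun hf => ?_⟩
  ext k j
  simp only [opMatrix, of_apply, hf j, b.repr_sum_self, unop_op]

lemma opMatrix_sub_one_eq_iff {f : V →ₗ[Aᵐᵒᵖ] V} {M : Matrix ι ι A} :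
    b.opMatrix (f - 1) = M ↔ ∀ j, f (b j) = b j + ∑ k, op (M k j) • b k := by
  simp only [opMatrix_eq_iff, LinearMap.sub_apply, Module.End.one_apply, sub_eq_iff_eq_add']

lemma opMatrix_injective : Function.Injective b.opMatrix := fun f f' hff' =>
  b.ext fun j => by rw [← b.sum_opMatrix_smul f, hff', b.sum_opMatrix_smul]

lemma opMatrix_mul (f f' : V →ₗ[Aᵐᵒᵖ] V) :
    b.opMatrix (f * f') = b.opMatrix f * b.opMatrix f' := by
  rw [opMatrix_eq_iff]
  intro j
  rw [Module.End.mul_apply, ← b.sum_opMatrix_smul f', map_sum]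
  simp only [map_smul, ← b.sum_opMatrix_smul f, Finset.smul_sum, smul_smul, ← op_mul, mul_apply,
    Finset.op_sum, Finset.sum_smul]
  exact Finset.sum_comm

lemma exists_linearEquiv_opMatrix_sub_one_eq {D : Matrix ι ι A} (hD : D * D = 0) :
    ∃ g : V ≃ₗ[Aᵐᵒᵖ] V, b.opMatrix ((g : V →ₗ[Aᵐᵒᵖ] V) - 1) = D := by
  obtain ⟨φ, rfl⟩ : ∃ φ, b.opMatrix φ = D :=
    ⟨b.constr ℕ fun j => ∑ k, op (D k j) • b k, b.opMatrix_eq_iff.2 fun j => b.constr_basis _ _ _⟩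
  have hφ : φ * φ = 0 := b.opMatrix_injective (by rw [opMatrix_mul, hD, opMatrix_zero])
  have hinv : (1 + φ) * (1 - φ) = 1 ∧ (1 - φ) * (1 + φ) = 1 := by
    constructor <;> simp [mul_sub, sub_mul, mul_add, add_mul, hφ]
  exact ⟨.ofLinearMap (1 + φ) (1 - φ) hinv.1 hinv.2, by simp⟩

variable (I : TwoSidedIdeal A)

lemma mem_span_op_smul_iff (v : V) :
    v ∈ Submodule.span Aᵐᵒᵖ {x | ∃ a ∈ I, ∃ w : V, x = op a • w} ↔
      ∀ k, unop (b.repr v k) ∈ I := by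
  refine ⟨fun hv => ?_, fun hv => ?_⟩
  · induction hv using Submodule.span_induction with
    | mem x hx =>
      obtain ⟨a, ha, w, rfl⟩ := hx
      intro k
      simpa using I.mul_mem_left _ _ ha
    | zero => simp [I.zero_mem]
    | add x y _ _ hx hy => simpa using fun k => I.add_mem (hx k) (hy k)
    | smul c x _ hx => simpa using fun k => I.mul_mem_right _ _ (hx k)
  · rw [← b.sum_repr v]
    refine Submodule.sum_mem _ fun k _ => Submodule.subset_span ⟨_, hv k, b k, by simp⟩

lemma forall_sub_mem_span_iff (f : V →ₗ[Aᵐᵒᵖ] V) :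
    (∀ v, f v - v ∈ Submodule.span Aᵐᵒᵖ {x | ∃ a ∈ I, ∃ w : V, x = op a • w}) ↔
      b.opMatrix (f - 1) ∈ I.matrix ι := by
  have hsub (v : V) : f v - v = (f - 1) v := rfl
  simp only [hsub]
  rw [b.forall_map_mem_iff]
  simp only [b.mem_span_op_smul_iff]
  exact forall_comm

end Module.Basis

namespace Matrix

variable {A ι : Type*} [Ring A] [Fintype ι] {I : TwoSidedIdeal A}

lemma mul_eq_zero_of_mem_matrix (hIsq : ∀ a ∈ I, ∀ c ∈ I, a * c = 0) {P Q : Matrix ι ι A}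
    (hP : P ∈ I.matrix ι) (hQ : Q ∈ I.matrix ι) : P * Q = 0 := by
  ext i j
  exact Finset.sum_eq_zero fun k _ => hIsq _ (hP i k) _ (hQ k j)

variable [StarRing A]

lemma conjTranspose_mem_matrix (hIstar : ∀ a ∈ I, star a ∈ I) {D : Matrix ι ι A}
    (hD : D ∈ I.matrix ι) : Dᴴ ∈ I.matrix ι :=
  fun i j => hIstar _ (hD j i)

lemma one_add_conjTranspose_mul_mul_eq_iff [DecidableEq ι] (hIstar : ∀ a ∈ I, star a ∈ I)
    (hIsq : ∀ a ∈ I, ∀ c ∈ I, a * c = 0) (X : Matrix ι ι A) {D : Matrix ι ι A}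
    (hD : D ∈ I.matrix ι) : (1 + D)ᴴ * X * (1 + D) = X ↔ Dᴴ * X + X * D = 0 := by
  have hsq : Dᴴ * X * D = 0 := mul_eq_zero_of_mem_matrix hIsq
    ((I.matrix ι).mul_mem_right _ _ (conjTranspose_mem_matrix hIstar hD)) hD
  have hexpand : (1 + D)ᴴ * X * (1 + D) = X + (Dᴴ * X + X * D) + Dᴴ * X * D := by
    simp only [conjTranspose_add, conjTranspose_one, add_mul, mul_add, one_mul, mul_one]
    abel
  rw [hexpand, hsq, add_zero, add_eq_left]

end Matrix

namespace HermitianForm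

variable {A V : Type*} [Ring A] [StarRing A] [AddCommGroup V] [Module Aᵐᵒᵖ V]
  (h : HermitianForm A V) (I : TwoSidedIdeal A)

/-- The kernel of the reduction `U → Ū` of the unitary group of `h` modulo `I`. -/
def congrKernel : Set (V ≃ₗ[Aᵐᵒᵖ] V) :=
  {g | (∀ u v, h.toFun (g u) (g v) = h.toFun u v) ∧
    ∀ v, g v - v ∈ Submodule.span Aᵐᵒᵖ {x | ∃ a ∈ I, ∃ w : V, x = op a • w}}

variable {ι : Type*} [Fintype ι] (b : Module.Basis ι Aᵐᵒᵖ V)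

lemma apply_map_basis (f : V →ₗ[Aᵐᵒᵖ] V) (i j : ι) :
    h.toFun (f (b i)) (f (b j)) = ((b.opMatrix f)ᴴ * h.gram b * b.opMatrix f) i j := by
  rw [← b.sum_opMatrix_smul f, ← b.sum_opMatrix_smul f, apply_sum_smul_basis]

variable {I} [DecidableEq ι]

lemma mem_congrKernel_iff (hIstar : ∀ a ∈ I, star a ∈ I) (hIsq : ∀ a ∈ I, ∀ c ∈ I, a * c = 0)
    (g : V ≃ₗ[Aᵐᵒᵖ] V) :
    g ∈ h.congrKernel I ↔ b.opMatrix (↑g - 1) ∈ I.matrix ι ∧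
      (b.opMatrix (↑g - 1))ᴴ * h.gram b + h.gram b * b.opMatrix (↑g - 1) = 0 := by
  have hg : b.opMatrix g = 1 + b.opMatrix (↑g - 1) := by
    rw [← b.opMatrix_one, ← b.opMatrix_add, add_sub_cancel]
  refine and_comm.trans <| (and_congr_left' (b.forall_sub_mem_span_iff I (g : V →ₗ[Aᵐᵒᵖ] V))).trans
    (and_congr_right fun hD => ?_)
  rw [← one_add_conjTranspose_mul_mul_eq_iff hIstar hIsq _ hD, ← hg]
  refine (h.forall_apply_map_eq_iff b (g : V →ₗ[Aᵐᵒᵖ] V)).trans ?_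
  simp only [h.apply_map_basis]
  exact Matrix.ext_iff

lemma card_congrKernel (hIstar : ∀ a ∈ I, star a ∈ I) (hIsq : ∀ a ∈ I, ∀ c ∈ I, a * c = 0) :
    Nat.card (h.congrKernel I) =
      Nat.card {D : Matrix ι ι A // D ∈ I.matrix ι ∧ Dᴴ * h.gram b + h.gram b * D = 0} := by
  refine Nat.card_congr <| .ofBijective
    (fun g => ⟨b.opMatrix ((g.1 : V →ₗ[Aᵐᵒᵖ] V) - 1),
      (h.mem_congrKernel_iff b hIstar hIsq g.1).1 g.2⟩) ⟨?_, ?_⟩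
  · rintro ⟨g, _⟩ ⟨g', _⟩ hgg'
    have hsub : (g : V →ₗ[Aᵐᵒᵖ] V) - 1 = (g' : V →ₗ[Aᵐᵒᵖ] V) - 1 :=
      b.opMatrix_injective (congrArg Subtype.val hgg')
    exact Subtype.ext (LinearEquiv.toLinearMap_injective (sub_left_injective hsub))
  · rintro ⟨D, hD⟩
    obtain ⟨g, rfl⟩ :=
      b.exists_linearEquiv_opMatrix_sub_one_eq (mul_eq_zero_of_mem_matrix hIsq hD.1 hD.1)
    exact ⟨⟨g, (h.mem_congrKernel_iff b hIstar hIsq g).2 hD⟩, rfl⟩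

end HermitianForm

namespace Matrix

variable {A ι : Type*} [Ring A] [StarRing A] {I : TwoSidedIdeal A}

lemma card_conjTranspose_mul_add_mul_eq_zero [Fintype ι] [DecidableEq ι] {X : Matrix ι ι A}
    (hXu : IsUnit X) (hXh : Xᴴ = X) :
    Nat.card {D : Matrix ι ι A // D ∈ I.matrix ι ∧ Dᴴ * X + X * D = 0} =
      Nat.card {N : Matrix ι ι A // N ∈ I.matrix ι ∧ Nᴴ + N = 0} := by
  obtain ⟨u, rfl⟩ := hXu
  refine Nat.card_congr <| (Units.mulLeft u).subtypeEquiv fun D => ?_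
  have hmem : D ∈ I.matrix ι ↔ (u : Matrix ι ι A) * D ∈ I.matrix ι :=
    ⟨(I.matrix ι).mul_mem_left _ _, fun huD => by
      simpa using (I.matrix ι).mul_mem_left (↑u⁻¹) _ huD⟩
  rw [Units.mulLeft_apply, conjTranspose_mul, hXh, hmem]

lemma conjTranspose_add_eq_zero_iff {N : Matrix ι ι A} :
    Nᴴ + N = 0 ↔ ∀ i j, star (N j i) + N i j = 0 := by
  simp [← Matrix.ext_iff]

variable [LinearOrder ι]

def ofUpperDiag (u : {p : ι × ι // p.1 < p.2} → A) (d : ι → A) : Matrix ι ι A :=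
  of fun i j =>
    if h : i < j then u ⟨(i, j), h⟩ else if h : j < i then -star (u ⟨(j, i), h⟩) else d i

section ofUpperDiag

variable (u : {p : ι × ι // p.1 < p.2} → A) (d : ι → A)

lemma ofUpperDiag_of_lt {i j : ι} (h : i < j) : ofUpperDiag u d i j = u ⟨(i, j), h⟩ := by
  simp [ofUpperDiag, h]

lemma ofUpperDiag_of_gt {i j : ι} (h : j < i) :
    ofUpperDiag u d i j = -star (u ⟨(j, i), h⟩) := by
  simp [ofUpperDiag, h, h.not_gt]

lemma ofUpperDiag_self (i : ι) : ofUpperDiag u d i i = d i := by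
  simp [ofUpperDiag]

lemma ofUpperDiag_mem_matrix [Fintype ι] (hIstar : ∀ a ∈ I, star a ∈ I) (hu : ∀ p, u p ∈ I)
    (hd : ∀ i, d i ∈ I) : ofUpperDiag u d ∈ I.matrix ι := by
  intro i j
  rcases lt_trichotomy i j with hij | rfl | hij
  · rw [ofUpperDiag_of_lt _ _ hij]
    exact hu _
  · rw [ofUpperDiag_self]
    exact hd i
  · rw [ofUpperDiag_of_gt _ _ hij]
    exact I.neg_mem (hIstar _ (hu _))

lemma ofUpperDiag_conjTranspose_add_self (hd : ∀ i, d i + star (d i) = 0) :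
    (ofUpperDiag u d)ᴴ + ofUpperDiag u d = 0 := by
  refine conjTranspose_add_eq_zero_iff.2 fun i j => ?_
  rcases lt_trichotomy i j with hij | rfl | hij
  · simp [ofUpperDiag_of_lt _ _ hij, ofUpperDiag_of_gt _ _ hij]
  · rw [ofUpperDiag_self, add_comm, hd]
  · simp [ofUpperDiag_of_lt _ _ hij, ofUpperDiag_of_gt _ _ hij]

end ofUpperDiag

lemma ofUpperDiag_eq {N : Matrix ι ι A} (hN : Nᴴ + N = 0) :
    ofUpperDiag (fun p => N p.1.1 p.1.2) (fun i => N i i) = N := by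
  ext i j
  rcases lt_trichotomy i j with hij | rfl | hij
  · rw [ofUpperDiag_of_lt _ _ hij]
  · rw [ofUpperDiag_self]
  · rw [ofUpperDiag_of_gt _ _ hij]
    exact (eq_neg_of_add_eq_zero_right (conjTranspose_add_eq_zero_iff.1 hN i j)).symm

def skewHermitianEquiv [Fintype ι] (hIstar : ∀ a ∈ I, star a ∈ I) :
    {N : Matrix ι ι A // N ∈ I.matrix ι ∧ Nᴴ + N = 0} ≃
      ({p : ι × ι // p.1 < p.2} → I) × (ι → {a : A // a ∈ I ∧ a + star a = 0}) where
  toFun N := (fun p => ⟨N.1 p.1.1 p.1.2, N.2.1 _ _⟩,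
    fun i => ⟨N.1 i i, N.2.1 i i, (add_comm _ _).trans (conjTranspose_add_eq_zero_iff.1 N.2.2 i i)⟩)
  invFun x := ⟨ofUpperDiag (fun p => x.1 p) (fun i => x.2 i),
    ofUpperDiag_mem_matrix _ _ hIstar (fun p => (x.1 p).2) (fun i => (x.2 i).2.1),
    ofUpperDiag_conjTranspose_add_self _ _ fun i => (x.2 i).2.2⟩
  left_inv N := Subtype.ext (ofUpperDiag_eq N.2.2)
  right_inv x := by
    refine Prod.ext (funext fun p => Subtype.ext ?_) (funext fun i => Subtype.ext ?_)
    · exact ofUpperDiag_of_lt (fun p => (x.1 p : A)) (fun i => x.2 i) p.2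
    · exact ofUpperDiag_self (fun p => (x.1 p : A)) (fun i => x.2 i) i

lemma card_skewHermitian [Fintype ι] (hIstar : ∀ a ∈ I, star a ∈ I) :
    Nat.card {N : Matrix ι ι A // N ∈ I.matrix ι ∧ Nᴴ + N = 0} =
      Nat.card I ^ (Fintype.card ι).choose 2 *
        Nat.card {a : A // a ∈ I ∧ a + star a = 0} ^ Fintype.card ι := by
  rw [Nat.card_congr (skewHermitianEquiv hIstar), Nat.card_prod, Nat.card_fun, Nat.card_fun,
    Nat.card_eq_fintype_card (α := {p : ι × ι // p.1 < p.2}), Fintype.card_subtype,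
    Fintype.card_product_filter_lt, Nat.card_eq_fintype_card (α := ι)]

end Matrix

theorem stmt_16_general {A V : Type*} [Ring A] [StarRing A]
    [AddCommGroup V] [Module Aᵐᵒᵖ V]
    (m : ℕ) (b : Module.Basis (Fin m) Aᵐᵒᵖ V)
    (h : HermitianForm A V)
    (I : TwoSidedIdeal A)
    (hIstar : ∀ a : A, a ∈ I → star a ∈ I)
    (hIsq : ∀ a ∈ I, ∀ c ∈ I, a * c = 0)
    (X : Matrix (Fin m) (Fin m) A)
    (hX : ∀ i j : Fin m, X i j = h.toFun (b i) (b j)) :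
    (∀ g : V ≃ₗ[Aᵐᵒᵖ] V,
      ((∀ u v : V, h.toFun (g u) (g v) = h.toFun u v) ∧
        (∀ v : V, g v - v ∈
          Submodule.span Aᵐᵒᵖ {x : V | ∃ a ∈ I, ∃ w : V, x = op a • w})) ↔
      (∃ M : Matrix (Fin m) (Fin m) A, (∀ k l : Fin m, M k l ∈ I) ∧
        (M.map star).transpose * X + X * M = 0 ∧
        ∀ j : Fin m, g (b j) = b j + ∑ k : Fin m, op (M k j) • b k)) ∧
    (((∀ k : Fin m, IsUnit (X k k)) ∧ (∀ k l : Fin m, k ≠ l → X k l = 0)) →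
      Nat.card {g : V ≃ₗ[Aᵐᵒᵖ] V //
          (∀ u v : V, h.toFun (g u) (g v) = h.toFun u v) ∧
          ∀ v : V, g v - v ∈
            Submodule.span Aᵐᵒᵖ {x : V | ∃ a ∈ I, ∃ w : V, x = op a • w}} =
        Nat.card I ^ (m * (m - 1) / 2) *
          Nat.card {a : A // a ∈ I ∧ a + star a = 0} ^ m) := by
  obtain rfl : X = h.gram b := Matrix.ext hX
  refine ⟨fun g => (h.mem_congrKernel_iff b hIstar hIsq g).trans ?_, fun ⟨hXu, hXd⟩ => ?_⟩
  · refine ⟨fun hD => ⟨_, hD.1, hD.2, b.opMatrix_sub_one_eq_iff.1 rfl⟩, ?_⟩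
    rintro ⟨M, hMI, hMX, hgM⟩
    rw [b.opMatrix_sub_one_eq_iff.2 hgM]
    exact ⟨hMI, hMX⟩
  · have hunit : IsUnit (h.gram b) := by
      rw [← IsDiag.diagonal_diag hXd]
      exact (Pi.isUnit_iff.2 hXu).map (diagonalRingHom (Fin m) A)
    refine (h.card_congrKernel b hIstar hIsq).trans ?_
    rw [card_conjTranspose_mul_add_mul_eq_zero hunit (h.gram_conjTranspose b),
      card_skewHermitian hIstar, Fintype.card_fin, Nat.choose_two_right]

/-- Lemma 5.3 and Corollary 5.4: for a `*`-invariant ideal `𝔦` with `𝔦² = 0`, the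
kernel of `U → Ū` consists exactly of the maps whose matrix relative to the chosen
basis is `1 + M` with `M` having entries in `𝔦` and `(M*)ᵗ X + X M = 0`; if the Gram
matrix `X` is diagonal with unit entries, this kernel has order
`|𝔦|^(m(m-1)/2) · |𝔨|^m` where `𝔨 = {a ∈ 𝔦 : a + a* = 0}`. -/
theorem stmt_16 {A V : Type*} [Ring A] [StarRing A] [IsLocalRing A] [Finite A]
    [AddCommGroup V] [Module Aᵐᵒᵖ V]
    (hcent : ∀ a : A, star a = a → a ∈ Set.center A)
    (h2 : IsUnit (2 : A))
    (m : ℕ) (hm : 1 ≤ m) (b : Module.Basis (Fin m) Aᵐᵒᵖ V)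
    (h : HermitianForm A V) (hnd : h.Nondeg)
    (I : TwoSidedIdeal A)
    (hIstar : ∀ a : A, a ∈ I → star a ∈ I)
    (hIsq : ∀ a ∈ I, ∀ c ∈ I, a * c = 0)
    (X : Matrix (Fin m) (Fin m) A)
    (hX : ∀ i j : Fin m, X i j = h.toFun (b i) (b j)) :
    (∀ g : V ≃ₗ[Aᵐᵒᵖ] V,
      ((∀ u v : V, h.toFun (g u) (g v) = h.toFun u v) ∧
        (∀ v : V, g v - v ∈
          Submodule.span Aᵐᵒᵖ {x : V | ∃ a ∈ I, ∃ w : V, x = op a • w})) ↔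
      (∃ M : Matrix (Fin m) (Fin m) A, (∀ k l : Fin m, M k l ∈ I) ∧
        (M.map star).transpose * X + X * M = 0 ∧
        ∀ j : Fin m, g (b j) = b j + ∑ k : Fin m, op (M k j) • b k)) ∧
    (((∀ k : Fin m, IsUnit (X k k)) ∧ (∀ k l : Fin m, k ≠ l → X k l = 0)) →
      Nat.card {g : V ≃ₗ[Aᵐᵒᵖ] V //
          (∀ u v : V, h.toFun (g u) (g v) = h.toFun u v) ∧
          ∀ v : V, g v - v ∈
            Submodule.span Aᵐᵒᵖ {x : V | ∃ a ∈ I, ∃ w : V, x = op a • w}} =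
        Nat.card I ^ (m * (m - 1) / 2) *
          Nat.card {a : A // a ∈ I ∧ a + star a = 0} ^ m) :=
  stmt_16_general m b h I hIstar hIsq X hX
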